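/- Suppose \varphi_1 \sigma > 1. Let p^0 = (p^0_1, p^0_2) \in (0,1)^2 with p^0_1 + p^0_2 \le 1, let p^k = h^k(p^0), and set r = \inf\{\lambda_1(p) : 0 < p_1 \le \bar{p}_1,\ 0 \le p_2 \le \bar{p}_2\}. Then there exists \bar{c} \in (0, p^0_1) such that for every c \le \bar{c} there is \bar{k} \in \mathbb{N} with the property: for all n \in \mathbb{N}, if p^n_1 \ge c then there exists k \le \bar{k} with p^{n+k}_1 > (3/(2r)) c. -/

import Mathlib

/-- `g α x` : the expected density after the epidemic stage on a percolated 3-tree. -/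
noncomputable def g (α x : ℝ) : ℝ :=
  if x = 0 then 0
  else (1 - Real.sqrt (1 - 4 * (1 - α) * x * (1 - x))) ^ 3 / (8 * (1 - α) ^ 2 * x ^ 2)

/-- `ψ(x) = (1 - e^{-x})/x`, with `ψ(0) = 1`. -/
noncomputable def psi (x : ℝ) : ℝ := if x = 0 then 1 else (1 - Real.exp (-x)) / x

/-- `Σ_p = β₁ p₁ + β₂ p₂`. -/
noncomputable def Sig (β₁ β₂ : ℝ) (p : ℝ × ℝ) : ℝ := β₁ * p.1 + β₂ * p.2

/-- Growth map, first type. -/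
noncomputable def f1 (β₁ β₂ : ℝ) (p : ℝ × ℝ) : ℝ :=
  if Sig β₁ β₂ p = 0 then 0
  else (1 - Real.exp (-Sig β₁ β₂ p)) * (β₁ * p.1) / Sig β₁ β₂ p

/-- Growth map, second type. -/
noncomputable def f2 (β₁ β₂ : ℝ) (p : ℝ × ℝ) : ℝ :=
  if Sig β₁ β₂ p = 0 then 0
  else (1 - Real.exp (-Sig β₁ β₂ p)) * (β₂ * p.2) / Sig β₁ β₂ p

/-- The two-type limiting map. -/
noncomputable def hmap (α₁ α₂ β₁ β₂ : ℝ) (p : ℝ × ℝ) : ℝ × ℝ :=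
  (g α₁ (f1 β₁ β₂ p), g α₂ (f2 β₁ β₂ p))

/-- `λ₁(p) = h₁(p)/p₁` (for `p₁ > 0`). -/
noncomputable def lam1 (α₁ β₁ β₂ : ℝ) (p : ℝ × ℝ) : ℝ := g α₁ (f1 β₁ β₂ p) / p.1

/-- `pbar α = sup_{x ∈ [0,1]} g α x`. -/
noncomputable def pbar (α : ℝ) : ℝ := sSup (g α '' Set.Icc 0 1)

/-- The one-type map for the strong species alone: `t(x) = g_{α₂}(1 - e^{-β₂ x})`. -/
noncomputable def tmap (α₂ β₂ : ℝ) (x : ℝ) : ℝ := g α₂ (1 - Real.exp (-(β₂ * x)))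

/-- `σ = inf_{x ∈ [0,p̄₂]} liminf_n (∏_{k<n} ψ(β₂ tᵏ(x)))^{1/n}`. -/
noncomputable def sigma (α₂ β₂ : ℝ) : ℝ :=
  sInf ((fun x => Filter.liminf
      (fun n : ℕ => (∏ k ∈ Finset.range n, psi (β₂ * (tmap α₂ β₂)^[k] x)) ^ (1 / (n : ℝ)))
      Filter.atTop) '' Set.Icc 0 (pbar α₂))

/-- `r = inf { λ₁(p) : 0 < p₁ ≤ p̄₁, 0 ≤ p₂ ≤ p̄₂ }`. -/
noncomputable def rconst (α₁ α₂ β₁ β₂ : ℝ) : ℝ :=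
  sInf {y : ℝ | ∃ p : ℝ × ℝ, 0 < p.1 ∧ p.1 ≤ pbar α₁ ∧ 0 ≤ p.2 ∧ p.2 ≤ pbar α₂ ∧
    y = lam1 α₁ β₁ β₂ p}

/-!
Near the axis `p₁ = 0` the map `h` acts on the second coordinate as the one-type map `t`, and
multiplies `p₁` by roughly `φ₁ ψ(β₂ p₂)`. Because `φ₁ σ > 1`, for some `s < σ` with `φ₁ s > 1`
every `x ∈ [0, p̄₂]` has a `k ≥ 1` with `∏_{j<k} ψ(β₂ tʲ(x)) > sᵏ`, and by compactness `k` stays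
below a uniform bound `k_b`. By uniform continuity of the iterates of `h`, an orbit whose first
coordinate stays below a small threshold `η` shadows the orbit of `t` on its second coordinate,
so its first coordinate grows by a fixed factor `ρ > 1` within `k_b` steps. Chaining `J` such
windows with `ρ^J > 3/(2r)` shows that `p₁ ≥ c` cannot stay below `3c/(2r) ≤ η` for `J k_b` steps.
-/

open Set Filter Topology

theorem IsCompact.exists_forall_exists_le_pos {X : Type*} [TopologicalSpace X] {K : Set X}
    (hK : IsCompact K) {F : ℕ → X → ℝ} (hF : ∀ n, ContinuousOn (F n) K)
    (hpos : ∀ x ∈ K, ∃ n, 0 < F n x) : ∃ N, ∀ x ∈ K, ∃ n ≤ N, 0 < F n x := by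
  choose U hUopen hU using fun n => continuousOn_iff'.1 (hF n) (Ioi 0) isOpen_Ioi
  obtain ⟨t, ht⟩ := hK.elim_finite_subcover U hUopen fun x hx => by
    obtain ⟨n, hn⟩ := hpos x hx
    exact mem_iUnion.2 ⟨n, ((hU n).le ⟨hn, hx⟩).1⟩
  refine ⟨t.sup id, fun x hx => ?_⟩
  obtain ⟨n, hnt, hxn⟩ := mem_iUnion₂.1 (ht hx)
  exact ⟨n, Finset.le_sup (f := id) hnt, ((hU n).ge ⟨hxn, hx⟩).1⟩

theorem IsCompact.exists_forall_dist_iterate_lt {X : Type*} [PseudoMetricSpace X] {K : Set X}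
    (hK : IsCompact K) {F : X → X} (hF : ContinuousOn F K) (hFK : MapsTo F K K) (n : ℕ)
    {ε : ℝ} (hε : 0 < ε) :
    ∃ δ > 0, ∀ x ∈ K, ∀ y ∈ K, dist x y < δ → ∀ j ≤ n, dist (F^[j] x) (F^[j] y) < ε := by
  -- uniform continuity of the whole orbit segment `x ↦ (F^[j] x)_{j ≤ n}` in the sup metric
  have hunif : UniformContinuousOn (fun x (j : Fin (n + 1)) => F^[j] x) K :=
    hK.uniformContinuousOn_of_continuous (continuousOn_pi.2 fun j => hF.iterate hFK j)
  obtain ⟨δ, hδ, hδε⟩ := Metric.uniformContinuousOn_iff.1 hunif ε hε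
  refine ⟨δ, hδ, fun x hx y hy hxy j hj => ?_⟩
  exact (dist_le_pi_dist _ _ (⟨j, Nat.lt_succ_of_le hj⟩ : Fin (n + 1))).trans_lt
    (hδε x hx y hy hxy)

theorem prod_mul_le_of_mul_le {x a : ℕ → ℝ} {k : ℕ} (ha : ∀ j < k, 0 ≤ a j)
    (hx : ∀ j < k, a j * x j ≤ x (j + 1)) : (∏ j ∈ Finset.range k, a j) * x 0 ≤ x k := by
  induction k with
  | zero => simp
  | succ k ih =>
    rw [Finset.prod_range_succ, mul_comm _ (a k), mul_assoc]
    exact (mul_le_mul_of_nonneg_left (ih (fun j hj => ha j (by omega))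
      fun j hj => hx j (by omega)) (ha k (by omega))).trans (hx k (by omega))

theorem exists_lt_of_forall_exists_mul_le {x : ℕ → ℝ} {ρ η : ℝ} {kb : ℕ} (hρ : 1 < ρ)
    (hgrow : ∀ n, (∀ k ≤ kb, x (n + k) ≤ η) → ∃ k ≤ kb, ρ * x n ≤ x (n + k))
    (M : ℝ) {c : ℝ} (hc : 0 < c) (hMc : M * c ≤ η) :
    ∃ K, ∀ n, c ≤ x n → ∃ k ≤ K, M * c < x (n + k) := by
  obtain ⟨J, hJ⟩ := pow_unbounded_of_one_lt M hρ
  refine ⟨kb * J, fun n hn => ?_⟩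
  by_contra! hstay
  have hchain : ∀ j ≤ J, ∃ d ≤ kb * j, ρ ^ j * c ≤ x (n + d) := by
    intro j
    induction j with
    | zero => exact fun _ => ⟨0, le_rfl, by simpa using hn⟩
    | succ j ih =>
      intro hj
      obtain ⟨d, hd, hxd⟩ := ih (by omega)
      have hkb : kb * j + kb ≤ kb * J := by nlinarith
      obtain ⟨k, hk, hxk⟩ := hgrow (n + d) fun k hk => by
        rw [add_assoc]; exact (hstay (d + k) (by omega)).trans hMc
      refine ⟨d + k, by nlinarith, ?_⟩
      rw [← add_assoc, pow_succ', mul_assoc]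
      exact (mul_le_mul_of_nonneg_left hxd (by linarith)).trans hxk
  obtain ⟨d, hd, hxd⟩ := hchain J le_rfl
  have := hstay d hd
  nlinarith

theorem exists_one_lt_mul_one_sub_pow {a : ℝ} (ha : 1 < a) (n : ℕ) :
    ∃ ε ∈ Ioo (0 : ℝ) 1, 1 < a * (1 - ε) ^ n := by
  have hlim : Tendsto (fun ε : ℝ => a * (1 - ε) ^ n) (𝓝[>] 0) (𝓝 a) := by
    simpa using ((by fun_prop : Continuous fun ε : ℝ => a * (1 - ε) ^ n).tendsto 0).mono_left
      nhdsWithin_le_nhds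
  obtain ⟨ε, hε, hε'⟩ := ((hlim.eventually (lt_mem_nhds ha)).and (Ioo_mem_nhdsGT one_pos)).exists
  exact ⟨ε, hε', hε⟩

theorem intervalIntegrable_exp_neg_mul (x : ℝ) :
    IntervalIntegrable (fun t => Real.exp (-(x * t))) MeasureTheory.volume 0 1 :=
  (by fun_prop : Continuous fun t => Real.exp (-(x * t))).intervalIntegrable 0 1

theorem psi_eq_integral (x : ℝ) : psi x = ∫ t in (0 : ℝ)..1, Real.exp (-(x * t)) := by
  rcases eq_or_ne x 0 with rfl | hx
  · simp [psi]
  have hderiv : ∀ t ∈ uIcc (0 : ℝ) 1,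
      HasDerivAt (fun t => -Real.exp (-(x * t)) / x) (Real.exp (-(x * t))) t := by
    intro t _
    refine (((hasDerivAt_id' t).const_mul x).neg.exp.neg.div_const x).congr_deriv ?_
    field_simp
    rfl
  rw [intervalIntegral.integral_eq_sub_of_hasDerivAt hderiv (intervalIntegrable_exp_neg_mul x),
    psi, if_neg hx]
  simp only [mul_one, mul_zero, neg_zero, Real.exp_zero]
  ring

@[fun_prop]
theorem continuous_psi : Continuous psi := by
  simp_rw [funext psi_eq_integral]
  exact intervalIntegral.continuous_parametric_intervalIntegral_of_continuous' (by fun_prop) _ _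

theorem psi_mul_self (x : ℝ) : psi x * x = 1 - Real.exp (-x) := by
  rcases eq_or_ne x 0 with rfl | hx
  · simp
  · rw [psi, if_neg hx, div_mul_cancel₀ _ hx]

theorem exp_neg_le_psi {x : ℝ} (hx : 0 ≤ x) : Real.exp (-x) ≤ psi x := by
  rw [psi_eq_integral]
  refine le_of_eq_of_le (by simp : Real.exp (-x) = ∫ _ in (0 : ℝ)..1, Real.exp (-x))
    (intervalIntegral.integral_mono_on zero_le_one intervalIntegrable_const
      (intervalIntegrable_exp_neg_mul x) fun t ht => ?_)
  exact Real.exp_le_exp.2 (by nlinarith [ht.2])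

theorem psi_pos {x : ℝ} (hx : 0 ≤ x) : 0 < psi x :=
  (Real.exp_pos _).trans_le (exp_neg_le_psi hx)

theorem psi_le_one {x : ℝ} (hx : 0 ≤ x) : psi x ≤ 1 := by
  rw [psi_eq_integral]
  refine (intervalIntegral.integral_mono_on zero_le_one (intervalIntegrable_exp_neg_mul x)
    intervalIntegrable_const fun t ht => ?_).trans_eq (by simp : ∫ _ in (0 : ℝ)..1, (1 : ℝ) = 1)
  exact Real.exp_le_one_iff.2 (by nlinarith [ht.1])

theorem psi_sub_psi_mem_Icc {x y : ℝ} (hx : 0 ≤ x) (hxy : x ≤ y) :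
    psi x - psi y ∈ Icc 0 (y - x) := by
  simp only [psi_eq_integral, mem_Icc, sub_nonneg, sub_le_iff_le_add']
  constructor
  · exact intervalIntegral.integral_mono_on zero_le_one (intervalIntegrable_exp_neg_mul y)
      (intervalIntegrable_exp_neg_mul x) fun t ht => Real.exp_le_exp.2 (by nlinarith [ht.1])
  · calc ∫ t in (0 : ℝ)..1, Real.exp (-(x * t))
        ≤ ∫ t in (0 : ℝ)..1, (Real.exp (-(y * t)) + (y - x)) :=
          intervalIntegral.integral_mono_on zero_le_one (intervalIntegrable_exp_neg_mul x)
            ((intervalIntegrable_exp_neg_mul y).add intervalIntegrable_const) fun t ht => ?_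
      _ = (∫ t in (0 : ℝ)..1, Real.exp (-(y * t))) + (y - x) := by
          rw [intervalIntegral.integral_add (intervalIntegrable_exp_neg_mul y)
            intervalIntegrable_const]
          simp
    -- `e^{-xt} - e^{-yt} = e^{-xt} (1 - e^{-(y-x)t}) ≤ (y - x) t`
    have hsplit : Real.exp (-(y * t)) = Real.exp (-(x * t)) * Real.exp (-((y - x) * t)) := by
      rw [← Real.exp_add]; ring_nf
    have hlin := Real.add_one_le_exp (-((y - x) * t))
    have hle : Real.exp (-(x * t)) ≤ 1 := Real.exp_le_one_iff.2 (by nlinarith [ht.1])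
    have hd : 0 ≤ (y - x) * t := mul_nonneg (sub_nonneg.2 hxy) ht.1
    rw [hsplit]
    nlinarith [mul_le_mul_of_nonneg_left hlin (Real.exp_pos (-(x * t))).le,
      mul_le_mul_of_nonneg_right hle hd, mul_le_mul_of_nonneg_left ht.2 (sub_nonneg.2 hxy)]

theorem abs_psi_sub_psi_le {x y : ℝ} (hx : 0 ≤ x) (hy : 0 ≤ y) :
    |psi x - psi y| ≤ |x - y| := by
  rcases le_total x y with hxy | hxy
  · obtain ⟨h₁, h₂⟩ := psi_sub_psi_mem_Icc hx hxy
    rw [abs_of_nonneg h₁, abs_of_nonpos (sub_nonpos.2 hxy)]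
    linarith
  · obtain ⟨h₁, h₂⟩ := psi_sub_psi_mem_Icc hy hxy
    rw [abs_of_nonpos (by linarith), abs_of_nonneg (sub_nonneg.2 hxy)]
    linarith

-- Rationalising the numerator removes the apparent singularity of `g α` at `0`.
theorem g_eq_div {α x : ℝ} (hα : α ∈ Ico (0 : ℝ) 1) (hx : x ∈ Icc (0 : ℝ) 1) :
    g α x = 8 * (1 - α) * x * (1 - x) ^ 3 / (1 + √(1 - 4 * (1 - α) * x * (1 - x))) ^ 3 := by
  rcases eq_or_ne x 0 with rfl | hx0
  · simp [g]
  have hu : 4 * (1 - α) * x * (1 - x) ≤ 1 := by nlinarith [hα.1, hα.2, sq_nonneg (2 * x - 1)]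
  set r := √(1 - 4 * (1 - α) * x * (1 - x))
  have hr : (1 - r) * (1 + r) = 4 * (1 - α) * x * (1 - x) := by
    nlinarith [Real.sq_sqrt (sub_nonneg.2 hu)]
  have h1α : 1 - α ≠ 0 := by linarith [hα.2]
  have hr0 : 0 ≤ r := Real.sqrt_nonneg _
  rw [g, if_neg hx0, div_eq_div_iff (by positivity) (by positivity)]
  calc (1 - r) ^ 3 * (1 + r) ^ 3 = ((1 - r) * (1 + r)) ^ 3 := by ring
    _ = _ := by rw [hr]; ring

theorem continuousOn_g {α : ℝ} (hα : α ∈ Ico (0 : ℝ) 1) : ContinuousOn (g α) (Icc 0 1) := by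
  refine ContinuousOn.congr (Continuous.continuousOn ?_) fun x hx => g_eq_div hα hx
  exact Continuous.div (by fun_prop) (by fun_prop) fun x => by positivity

theorem mul_one_sub_pow_le_g {α x : ℝ} (hα : α ∈ Ico (0 : ℝ) 1) (hx : x ∈ Icc (0 : ℝ) 1) :
    (1 - α) * x * (1 - x) ^ 3 ≤ g α x := by
  have hr : √(1 - 4 * (1 - α) * x * (1 - x)) ≤ 1 := Real.sqrt_le_one.2 (by
    nlinarith [hα.1, hα.2, hx.1, hx.2, mul_nonneg hx.1 (sub_nonneg.2 hx.2)])
  have hden : (1 + √(1 - 4 * (1 - α) * x * (1 - x))) ^ 3 ≤ 8 := by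
    nlinarith [pow_le_pow_left₀ (by positivity) (add_le_add_left hr 1) 3]
  have hnum : 0 ≤ (1 - α) * x * (1 - x) ^ 3 := by
    have := sub_nonneg.2 hx.2; have := sub_nonneg.2 hα.2.le; have := hx.1; positivity
  rw [g_eq_div hα hx, le_div_iff₀ (by positivity)]
  nlinarith [mul_le_mul_of_nonneg_left hden hnum]

theorem g_nonneg {α x : ℝ} (hα : α ∈ Ico (0 : ℝ) 1) (hx : x ∈ Icc (0 : ℝ) 1) : 0 ≤ g α x := by
  refine le_trans ?_ (mul_one_sub_pow_le_g hα hx)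
  have := sub_nonneg.2 hx.2; have := sub_nonneg.2 hα.2.le; have := hx.1; positivity

theorem g_le_eight {α x : ℝ} (hα : α ∈ Ico (0 : ℝ) 1) (hx : x ∈ Icc (0 : ℝ) 1) : g α x ≤ 8 := by
  rw [g_eq_div hα hx]
  have h₁ : (1 - x) ^ 3 ≤ 1 := pow_le_one₀ (sub_nonneg.2 hx.2) (by linarith [hx.1])
  have h₂ : (1 - α) * x * (1 - x) ^ 3 ≤ 1 :=
    mul_le_one₀ (mul_le_one₀ (by linarith [hα.1]) hx.1 hx.2) (pow_nonneg (sub_nonneg.2 hx.2) 3) h₁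
  have h₃ : 1 ≤ (1 + √(1 - 4 * (1 - α) * x * (1 - x))) ^ 3 :=
    one_le_pow₀ (le_add_of_nonneg_right (Real.sqrt_nonneg _))
  exact div_le_of_le_mul₀ (by positivity) (by norm_num) (by nlinarith)

theorem g_le_pbar {α x : ℝ} (hα : α ∈ Ico (0 : ℝ) 1) (hx : x ∈ Icc (0 : ℝ) 1) :
    g α x ≤ pbar α :=
  le_csSup ⟨8, forall_mem_image.2 fun _ hy => g_le_eight hα hy⟩ (mem_image_of_mem _ hx)

theorem psi_add_mul_mem_Ico {a b : ℝ} (ha : 0 ≤ a) (hb : 0 ≤ b) : psi (a + b) * a ∈ Ico 0 1 := by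
  have hψ := psi_pos (add_nonneg ha hb)
  refine ⟨mul_nonneg hψ.le ha, ?_⟩
  calc psi (a + b) * a ≤ psi (a + b) * (a + b) := by nlinarith
    _ = 1 - Real.exp (-(a + b)) := psi_mul_self _
    _ < 1 := sub_lt_self _ (Real.exp_pos _)

section GrowthMap

variable {β₁ β₂ : ℝ} {p : ℝ × ℝ}

theorem f1_eq (hβ₁ : 0 ≤ β₁) (hβ₂ : 0 ≤ β₂) (hp₁ : 0 ≤ p.1) (hp₂ : 0 ≤ p.2) :
    f1 β₁ β₂ p = psi (Sig β₁ β₂ p) * (β₁ * p.1) := by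
  unfold f1
  split_ifs with hS
  · have : β₁ * p.1 = 0 := by
      unfold Sig at hS; nlinarith [mul_nonneg hβ₁ hp₁, mul_nonneg hβ₂ hp₂]
    rw [this, mul_zero]
  · rw [psi, if_neg hS]; ring

theorem f2_eq (hβ₁ : 0 ≤ β₁) (hβ₂ : 0 ≤ β₂) (hp₁ : 0 ≤ p.1) (hp₂ : 0 ≤ p.2) :
    f2 β₁ β₂ p = psi (Sig β₁ β₂ p) * (β₂ * p.2) := by
  unfold f2
  split_ifs with hS
  · have : β₂ * p.2 = 0 := by
      unfold Sig at hS; nlinarith [mul_nonneg hβ₁ hp₁, mul_nonneg hβ₂ hp₂]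
    rw [this, mul_zero]
  · rw [psi, if_neg hS]; ring

theorem f1_mem_Ico (hβ₁ : 0 ≤ β₁) (hβ₂ : 0 ≤ β₂) (hp₁ : 0 ≤ p.1) (hp₂ : 0 ≤ p.2) :
    f1 β₁ β₂ p ∈ Ico 0 1 := by
  rw [f1_eq hβ₁ hβ₂ hp₁ hp₂]
  exact psi_add_mul_mem_Ico (mul_nonneg hβ₁ hp₁) (mul_nonneg hβ₂ hp₂)

theorem f2_mem_Ico (hβ₁ : 0 ≤ β₁) (hβ₂ : 0 ≤ β₂) (hp₁ : 0 ≤ p.1) (hp₂ : 0 ≤ p.2) :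
    f2 β₁ β₂ p ∈ Ico 0 1 := by
  rw [f2_eq hβ₁ hβ₂ hp₁ hp₂, Sig, add_comm]
  exact psi_add_mul_mem_Ico (mul_nonneg hβ₂ hp₂) (mul_nonneg hβ₁ hp₁)

end GrowthMap

section TwoTypeMap

variable {α₁ α₂ β₁ β₂ : ℝ}

theorem mapsTo_hmap (hα₁ : α₁ ∈ Ico (0 : ℝ) 1) (hα₂ : α₂ ∈ Ico (0 : ℝ) 1) (hβ₁ : 0 ≤ β₁)
    (hβ₂ : 0 ≤ β₂) :
    MapsTo (hmap α₁ α₂ β₁ β₂) (Ici 0 ×ˢ Ici 0) (Icc 0 (pbar α₁) ×ˢ Icc 0 (pbar α₂)) := by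
  intro p ⟨hp₁, hp₂⟩
  have h₁ := Ico_subset_Icc_self (f1_mem_Ico hβ₁ hβ₂ hp₁ hp₂)
  have h₂ := Ico_subset_Icc_self (f2_mem_Ico hβ₁ hβ₂ hp₁ hp₂)
  exact ⟨⟨g_nonneg hα₁ h₁, g_le_pbar hα₁ h₁⟩, ⟨g_nonneg hα₂ h₂, g_le_pbar hα₂ h₂⟩⟩

theorem hmap_fst_pos (hα₁ : α₁ ∈ Ico (0 : ℝ) 1) (hβ₁ : 0 < β₁) (hβ₂ : 0 ≤ β₂) {p : ℝ × ℝ}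
    (hp₁ : 0 < p.1) (hp₂ : 0 ≤ p.2) : 0 < (hmap α₁ α₂ β₁ β₂ p).1 := by
  obtain ⟨-, hf₁⟩ := f1_mem_Ico hβ₁.le hβ₂ hp₁.le hp₂
  have hf₀ : 0 < f1 β₁ β₂ p := by
    rw [f1_eq hβ₁.le hβ₂ hp₁.le hp₂]
    exact mul_pos (psi_pos (by unfold Sig; positivity)) (mul_pos hβ₁ hp₁)
  refine lt_of_lt_of_le ?_ (mul_one_sub_pow_le_g hα₁ ⟨hf₀.le, hf₁.le⟩)
  have := sub_pos.2 hα₁.2; have := sub_pos.2 hf₁; positivity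

theorem continuousOn_hmap (hα₁ : α₁ ∈ Ico (0 : ℝ) 1) (hα₂ : α₂ ∈ Ico (0 : ℝ) 1) (hβ₁ : 0 ≤ β₁)
    (hβ₂ : 0 ≤ β₂) : ContinuousOn (hmap α₁ α₂ β₁ β₂) (Ici 0 ×ˢ Ici 0) := by
  have hf₁ : ContinuousOn (f1 β₁ β₂) (Ici 0 ×ˢ Ici 0) :=
    ContinuousOn.congr (by unfold Sig; fun_prop) fun p hp => f1_eq hβ₁ hβ₂ hp.1 hp.2
  have hf₂ : ContinuousOn (f2 β₁ β₂) (Ici 0 ×ˢ Ici 0) :=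
    ContinuousOn.congr (by unfold Sig; fun_prop) fun p hp => f2_eq hβ₁ hβ₂ hp.1 hp.2
  exact ((continuousOn_g hα₁).comp hf₁ fun p hp =>
      Ico_subset_Icc_self (f1_mem_Ico hβ₁ hβ₂ hp.1 hp.2)).prodMk
    ((continuousOn_g hα₂).comp hf₂ fun p hp => Ico_subset_Icc_self (f2_mem_Ico hβ₁ hβ₂ hp.1 hp.2))

end TwoTypeMap

section Axis

variable {α₁ α₂ β₁ β₂ : ℝ}

theorem hmap_zero_fst (x : ℝ) : hmap α₁ α₂ β₁ β₂ (0, x) = (0, tmap α₂ β₂ x) := by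
  have hf₁ : f1 β₁ β₂ (0, x) = 0 := by unfold f1; split_ifs <;> simp
  have hf₂ : f2 β₁ β₂ (0, x) = 1 - Real.exp (-(β₂ * x)) := by
    unfold f2 Sig
    simp only [mul_zero, zero_add]
    split_ifs with h
    · simp [h]
    · exact mul_div_cancel_right₀ _ h
  simp [hmap, hf₁, hf₂, g, tmap]

theorem hmap_iterate_zero_fst (n : ℕ) (x : ℝ) :
    (hmap α₁ α₂ β₁ β₂)^[n] (0, x) = (0, (tmap α₂ β₂)^[n] x) :=
  (Function.Semiconj.iterate_right (fun y => (hmap_zero_fst y).symm) n x).symm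

theorem mapsTo_one_sub_exp_neg_mul (hβ₂ : 0 ≤ β₂) :
    MapsTo (fun x => 1 - Real.exp (-(β₂ * x))) (Ici 0) (Icc 0 1) := fun x hx =>
  ⟨sub_nonneg.2 (Real.exp_le_one_iff.2 (by nlinarith [mem_Ici.1 hx])),
    sub_le_self _ (Real.exp_pos _).le⟩

theorem mapsTo_tmap (hα₂ : α₂ ∈ Ico (0 : ℝ) 1) (hβ₂ : 0 ≤ β₂) :
    MapsTo (tmap α₂ β₂) (Ici 0) (Icc 0 (pbar α₂)) := fun _ hx =>
  have hy := mapsTo_one_sub_exp_neg_mul hβ₂ hx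
  ⟨g_nonneg hα₂ hy, g_le_pbar hα₂ hy⟩

theorem continuousOn_tmap (hα₂ : α₂ ∈ Ico (0 : ℝ) 1) (hβ₂ : 0 ≤ β₂) :
    ContinuousOn (tmap α₂ β₂) (Ici 0) :=
  (continuousOn_g hα₂).comp (by fun_prop) (mapsTo_one_sub_exp_neg_mul hβ₂)

end Axis

theorem mul_psi_mul_le_hmap_fst {α₁ α₂ β₁ β₂ : ℝ} (hα₁ : α₁ ∈ Ico (0 : ℝ) 1) (hβ₁ : 0 ≤ β₁)
    (hβ₂ : 0 ≤ β₂) {p : ℝ × ℝ} (hp₁ : 0 ≤ p.1) (hp₂ : 0 ≤ p.2) {ε τ m : ℝ} (hε : ε ∈ Icc (0 : ℝ) 1)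
    (hτ : 0 ≤ τ) (hm : m ≤ psi (β₂ * τ)) (h₁ : β₁ * p.1 ≤ ε * m / 2)
    (h₂ : β₂ * |p.2 - τ| ≤ ε * m / 2) :
    (1 - α₁) * β₁ * (1 - ε) ^ 4 * psi (β₂ * τ) * p.1 ≤ (hmap α₁ α₂ β₁ β₂ p).1 := by
  set P := psi (β₂ * τ)
  have hP₁ : P ≤ 1 := psi_le_one (mul_nonneg hβ₂ hτ)
  have hβp : 0 ≤ β₁ * p.1 := mul_nonneg hβ₁ hp₁
  have hS : 0 ≤ Sig β₁ β₂ p := by unfold Sig; have := mul_nonneg hβ₂ hp₂; positivity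
  have hpsi : (1 - ε) * P ≤ psi (Sig β₁ β₂ p) := by
    have hdist : |Sig β₁ β₂ p - β₂ * τ| ≤ ε * P := by
      calc |Sig β₁ β₂ p - β₂ * τ| = |β₁ * p.1 + β₂ * (p.2 - τ)| := by unfold Sig; ring_nf
        _ ≤ β₁ * p.1 + β₂ * |p.2 - τ| := by
          refine (abs_add_le _ _).trans_eq ?_
          rw [abs_of_nonneg hβp, abs_mul, abs_of_nonneg hβ₂]
        _ ≤ ε * P := by nlinarith [hε.1]
    have := (abs_le.1 ((abs_psi_sub_psi_le hS (mul_nonneg hβ₂ hτ)).trans hdist)).1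
    linarith
  obtain ⟨hf₀, hf₁⟩ := f1_mem_Ico hβ₁ hβ₂ hp₁ hp₂
  have hfε : f1 β₁ β₂ p ≤ ε := by
    rw [f1_eq hβ₁ hβ₂ hp₁ hp₂]
    nlinarith [mul_le_mul_of_nonneg_right (psi_le_one hS) hβp,
      mul_le_mul_of_nonneg_left (hm.trans hP₁) hε.1]
  calc (1 - α₁) * β₁ * (1 - ε) ^ 4 * P * p.1
      = (1 - α₁) * ((1 - ε) * P * (β₁ * p.1)) * (1 - ε) ^ 3 := by ring
    _ ≤ (1 - α₁) * f1 β₁ β₂ p * (1 - f1 β₁ β₂ p) ^ 3 := by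
      have h1α := sub_nonneg.2 hα₁.2.le
      have hf : (1 - ε) * P * (β₁ * p.1) ≤ f1 β₁ β₂ p := by
        rw [f1_eq hβ₁ hβ₂ hp₁ hp₂]; exact mul_le_mul_of_nonneg_right hpsi hβp
      exact mul_le_mul (mul_le_mul_of_nonneg_left hf h1α)
        (pow_le_pow_left₀ (sub_nonneg.2 hε.2) (by linarith) 3)
        (pow_nonneg (sub_nonneg.2 hε.2) 3) (mul_nonneg h1α hf₀)
    _ ≤ (hmap α₁ α₂ β₁ β₂ p).1 := mul_one_sub_pow_le_g hα₁ ⟨hf₀, hf₁.le⟩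

noncomputable def psiProd (α₂ β₂ : ℝ) (n : ℕ) (x : ℝ) : ℝ :=
  ∏ k ∈ Finset.range n, psi (β₂ * (tmap α₂ β₂)^[k] x)

section Sigma

variable {α₂ β₂ : ℝ}

theorem tmap_iterate_mem (hα₂ : α₂ ∈ Ico (0 : ℝ) 1) (hβ₂ : 0 ≤ β₂) {x : ℝ}
    (hx : x ∈ Icc 0 (pbar α₂)) (k : ℕ) : (tmap α₂ β₂)^[k] x ∈ Icc 0 (pbar α₂) :=
  ((mapsTo_tmap hα₂ hβ₂).mono_left Icc_subset_Ici_self).iterate k hx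

theorem psiProd_mem_Icc (hα₂ : α₂ ∈ Ico (0 : ℝ) 1) (hβ₂ : 0 ≤ β₂) {x : ℝ}
    (hx : x ∈ Icc 0 (pbar α₂)) (n : ℕ) : psiProd α₂ β₂ n x ∈ Icc 0 1 := by
  have h := fun k => mul_nonneg hβ₂ (tmap_iterate_mem hα₂ hβ₂ hx k).1
  exact ⟨Finset.prod_nonneg fun k _ => (psi_pos (h k)).le,
    Finset.prod_le_one (fun k _ => (psi_pos (h k)).le) fun k _ => psi_le_one (h k)⟩

theorem continuousOn_psiProd (hα₂ : α₂ ∈ Ico (0 : ℝ) 1) (hβ₂ : 0 ≤ β₂) (n : ℕ) :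
    ContinuousOn (psiProd α₂ β₂ n) (Icc 0 (pbar α₂)) := by
  have ht := ((continuousOn_tmap hα₂ hβ₂).mono Icc_subset_Ici_self).iterate
    ((mapsTo_tmap hα₂ hβ₂).mono_left Icc_subset_Ici_self)
  exact continuousOn_finsetProd _ fun k _ =>
    continuous_psi.comp_continuousOn (continuousOn_const.mul (ht k))

theorem sigma_le_liminf (hα₂ : α₂ ∈ Ico (0 : ℝ) 1) (hβ₂ : 0 ≤ β₂) {x : ℝ}
    (hx : x ∈ Icc 0 (pbar α₂)) :
    sigma α₂ β₂ ≤ liminf (fun n : ℕ => psiProd α₂ β₂ n x ^ (1 / (n : ℝ))) atTop := by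
  refine csInf_le ⟨0, forall_mem_image.2 fun y hy => ?_⟩ (mem_image_of_mem _ hx)
  have hmem := psiProd_mem_Icc hα₂ hβ₂ hy
  refine le_liminf_of_le (isBoundedUnder_of ⟨1, fun n => ?_⟩).isCoboundedUnder_ge
    (Eventually.of_forall fun n => Real.rpow_nonneg (hmem n).1 _)
  exact Real.rpow_le_one (hmem n).1 (hmem n).2 (by positivity)

theorem exists_pow_lt_psiProd (hα₂ : α₂ ∈ Ico (0 : ℝ) 1) (hβ₂ : 0 ≤ β₂) {x s : ℝ}
    (hx : x ∈ Icc 0 (pbar α₂)) (hs₀ : 0 ≤ s) (hs : s < sigma α₂ β₂) :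
    ∃ k, 1 ≤ k ∧ s ^ k < psiProd α₂ β₂ k x := by
  have hmem := psiProd_mem_Icc hα₂ hβ₂ hx
  obtain ⟨k, hk⟩ := eventually_atTop.1 <| eventually_lt_of_lt_liminf
    (hs.trans_le (sigma_le_liminf hα₂ hβ₂ hx))
    (isBoundedUnder_of ⟨0, fun n => Real.rpow_nonneg (hmem n).1 _⟩)
  refine ⟨k + 1, by omega, ?_⟩
  calc s ^ (k + 1) < (psiProd α₂ β₂ (k + 1) x ^ (1 / ((k + 1 : ℕ) : ℝ))) ^ (k + 1) :=
        pow_lt_pow_left₀ (hk _ (by omega)) hs₀ (by omega)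
    _ = psiProd α₂ β₂ (k + 1) x := by
        rw [← Real.rpow_natCast, ← Real.rpow_mul (hmem _).1,
          one_div_mul_cancel (Nat.cast_ne_zero.2 k.succ_ne_zero), Real.rpow_one]

theorem exists_forall_pow_lt_psiProd (hα₂ : α₂ ∈ Ico (0 : ℝ) 1) (hβ₂ : 0 ≤ β₂) {s : ℝ}
    (hs₀ : 0 ≤ s) (hs : s < sigma α₂ β₂) :
    ∃ kb, ∀ x ∈ Icc 0 (pbar α₂), ∃ k, 1 ≤ k ∧ k ≤ kb ∧ s ^ k < psiProd α₂ β₂ k x := by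
  obtain ⟨N, hN⟩ := isCompact_Icc.exists_forall_exists_le_pos
    (F := fun n x => psiProd α₂ β₂ (n + 1) x - s ^ (n + 1))
    (fun n => (continuousOn_psiProd hα₂ hβ₂ _).sub continuousOn_const) fun x hx => by
      obtain ⟨k, hk, hlt⟩ := exists_pow_lt_psiProd hα₂ hβ₂ hx hs₀ hs
      exact ⟨k - 1, sub_pos.2 (by rwa [Nat.sub_add_cancel hk])⟩
  refine ⟨N + 1, fun x hx => ?_⟩
  obtain ⟨n, hn, hpos⟩ := hN x hx
  exact ⟨n + 1, by omega, by omega, sub_pos.1 hpos⟩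

end Sigma

section Dynamics

variable {α₁ α₂ β₁ β₂ : ℝ}

theorem hmap_iterate_mem (hα₁ : α₁ ∈ Ico (0 : ℝ) 1) (hα₂ : α₂ ∈ Ico (0 : ℝ) 1) (hβ₁ : 0 ≤ β₁)
    (hβ₂ : 0 ≤ β₂) {q : ℝ × ℝ} (hq : q ∈ Ici 0 ×ˢ Ici 0) (j : ℕ) :
    (hmap α₁ α₂ β₁ β₂)^[j] q ∈ Ici 0 ×ˢ Ici 0 :=
  ((mapsTo_hmap hα₁ hα₂ hβ₁ hβ₂).mono_right
    (prod_mono Icc_subset_Ici_self Icc_subset_Ici_self)).iterate j hq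

theorem exists_forall_abs_snd_hmap_iterate_sub_lt (hα₁ : α₁ ∈ Ico (0 : ℝ) 1)
    (hα₂ : α₂ ∈ Ico (0 : ℝ) 1) (hβ₁ : 0 ≤ β₁) (hβ₂ : 0 ≤ β₂) (n : ℕ) {δ : ℝ} (hδ : 0 < δ) :
    ∃ η > 0, ∀ q : ℝ × ℝ, 0 ≤ q.1 → q.1 ≤ η → q.2 ∈ Icc 0 (pbar α₂) → ∀ j ≤ n,
      |((hmap α₁ α₂ β₁ β₂)^[j] q).2 - (tmap α₂ β₂)^[j] q.2| < δ := by
  set K := Icc 0 (max 1 (pbar α₁)) ×ˢ Icc 0 (pbar α₂)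
  have hKQ : K ⊆ Ici 0 ×ˢ Ici 0 := prod_mono Icc_subset_Ici_self Icc_subset_Ici_self
  have hmaps : MapsTo (hmap α₁ α₂ β₁ β₂) K K :=
    ((mapsTo_hmap hα₁ hα₂ hβ₁ hβ₂).mono_left hKQ).mono_right
      (prod_mono (Icc_subset_Icc_right (le_max_right _ _)) subset_rfl)
  obtain ⟨η, hη, hηK⟩ := (isCompact_Icc.prod isCompact_Icc).exists_forall_dist_iterate_lt
    ((continuousOn_hmap hα₁ hα₂ hβ₁ hβ₂).mono hKQ) hmaps n hδ
  refine ⟨min (η / 2) 1, by positivity, fun q hq₁ hqη hq₂ j hj => ?_⟩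
  have hq : q ∈ K := ⟨⟨hq₁, hqη.trans ((min_le_right _ _).trans (le_max_left _ _))⟩, hq₂⟩
  have h0 : ((0 : ℝ), q.2) ∈ K := ⟨⟨le_rfl, zero_le_one.trans (le_max_left _ _)⟩, hq₂⟩
  have hdist : dist q (0, q.2) < η := by
    rw [Prod.dist_eq, dist_self, Real.dist_eq, sub_zero, abs_of_nonneg hq₁,
      max_eq_left hq₁]
    linarith [min_le_left (η / 2) 1]
  have h := hηK q hq _ h0 hdist j hj
  rw [hmap_iterate_zero_fst, Prod.dist_eq, Real.dist_eq, Real.dist_eq] at h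
  exact (le_max_right _ _).trans_lt h

end Dynamics

section Window

variable {α₁ α₂ β₁ β₂ : ℝ}

theorem pow_mul_psiProd_mul_le_hmap_iterate_fst (hα₁ : α₁ ∈ Ico (0 : ℝ) 1)
    (hα₂ : α₂ ∈ Ico (0 : ℝ) 1) (hβ₁ : 0 ≤ β₁) (hβ₂ : 0 ≤ β₂) {q : ℝ × ℝ}
    (hq : q ∈ Ici 0 ×ˢ Ici 0) {ε m : ℝ} (hε : ε ∈ Icc (0 : ℝ) 1) {k : ℕ}
    (hm : ∀ j < k, m ≤ psi (β₂ * (tmap α₂ β₂)^[j] q.2))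
    (h₁ : ∀ j < k, β₁ * ((hmap α₁ α₂ β₁ β₂)^[j] q).1 ≤ ε * m / 2)
    (h₂ : ∀ j < k, β₂ * |((hmap α₁ α₂ β₁ β₂)^[j] q).2 - (tmap α₂ β₂)^[j] q.2| ≤ ε * m / 2) :
    ((1 - α₁) * β₁ * (1 - ε) ^ 4) ^ k * psiProd α₂ β₂ k q.2 * q.1 ≤
      ((hmap α₁ α₂ β₁ β₂)^[k] q).1 := by
  have hτ : ∀ j, 0 ≤ (tmap α₂ β₂)^[j] q.2 := fun j => (mapsTo_tmap hα₂ hβ₂).mono_right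
    Icc_subset_Ici_self |>.iterate j hq.2
  have hstep := prod_mul_le_of_mul_le (x := fun j => ((hmap α₁ α₂ β₁ β₂)^[j] q).1)
    (a := fun j => (1 - α₁) * β₁ * (1 - ε) ^ 4 * psi (β₂ * (tmap α₂ β₂)^[j] q.2)) (k := k)
    (fun j _ => by
      have := sub_nonneg.2 hα₁.2.le; have := sub_nonneg.2 hε.2
      have := psi_pos (mul_nonneg hβ₂ (hτ j)); positivity)
    fun j hj => by
      have hp := hmap_iterate_mem hα₁ hα₂ hβ₁ hβ₂ hq j
      simpa only [Function.iterate_succ_apply'] using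
        mul_psi_mul_le_hmap_fst hα₁ hβ₁ hβ₂ hp.1 hp.2 hε (hτ j) (hm j hj) (h₁ j hj) (h₂ j hj)
  rwa [Finset.prod_mul_distrib, Finset.prod_const, Finset.card_range] at hstep

theorem exists_growth_window (hα₁ : α₁ ∈ Ico (0 : ℝ) 1) (hα₂ : α₂ ∈ Ico (0 : ℝ) 1)
    (hβ₁ : 0 < β₁) (hβ₂ : 0 < β₂) (hσ : 1 < (1 - α₁) * β₁ * sigma α₂ β₂) :
    ∃ ρ > 1, ∃ kb : ℕ, ∃ η > 0, ∀ q : ℝ × ℝ, 0 ≤ q.1 → q.2 ∈ Icc 0 (pbar α₂) →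
      (∀ j ≤ kb, ((hmap α₁ α₂ β₁ β₂)^[j] q).1 ≤ η) →
      ∃ k ≤ kb, ρ * q.1 ≤ ((hmap α₁ α₂ β₁ β₂)^[k] q).1 := by
  set φ := (1 - α₁) * β₁
  have hφ : 0 < φ := mul_pos (sub_pos.2 hα₁.2) hβ₁
  obtain ⟨s, hφs, hsσ⟩ := exists_between ((div_lt_iff₀' hφ).2 hσ : 1 / φ < sigma α₂ β₂)
  have hs : 0 < s := (one_div_pos.2 hφ).trans hφs
  obtain ⟨ε, hε, hρ⟩ := exists_one_lt_mul_one_sub_pow ((div_lt_iff₀' hφ).1 hφs) 4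
  have hε₀ := hε.1
  obtain ⟨kb, hkb⟩ := exists_forall_pow_lt_psiProd hα₂ hβ₂.le hs.le hsσ
  -- additive errors of size `ε m` in `ψ(β₂ τ)`, `τ ∈ [0, p̄₂]`, are relative errors of size `≤ ε`
  set m := Real.exp (-(β₂ * pbar α₂))
  have hm : 0 < m := Real.exp_pos _
  have hmψ : ∀ τ ∈ Icc 0 (pbar α₂), m ≤ psi (β₂ * τ) := fun τ hτ =>
    (Real.exp_le_exp.2 (neg_le_neg (mul_le_mul_of_nonneg_left hτ.2 hβ₂.le))).trans
      (exp_neg_le_psi (mul_nonneg hβ₂.le hτ.1))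
  obtain ⟨η, hη, hshadow⟩ := exists_forall_abs_snd_hmap_iterate_sub_lt hα₁ hα₂ hβ₁.le hβ₂.le kb
    (by positivity : 0 < ε * m / (2 * β₂))
  have hβδ : β₂ * (ε * m / (2 * β₂)) = ε * m / 2 := by field_simp
  set η' := min η (ε * m / (2 * β₁))
  have hβη : β₁ * η' ≤ ε * m / 2 := calc
    β₁ * η' ≤ β₁ * (ε * m / (2 * β₁)) := mul_le_mul_of_nonneg_left (min_le_right _ _) hβ₁.le
    _ = ε * m / 2 := by field_simp
  refine ⟨φ * s * (1 - ε) ^ 4, hρ, kb, η', by positivity, fun q hq₁ hq₂ hsmall => ?_⟩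
  obtain ⟨k, hk₁, hkkb, hsk⟩ := hkb q.2 hq₂
  have horbit := pow_mul_psiProd_mul_le_hmap_iterate_fst hα₁ hα₂ hβ₁.le hβ₂.le
    (q := q) ⟨hq₁, hq₂.1⟩ (Ioo_subset_Icc_self hε) (k := k)
    (fun j _ => hmψ _ (tmap_iterate_mem hα₂ hβ₂.le hq₂ j))
    (fun j hj => (mul_le_mul_of_nonneg_left (hsmall j (by omega)) hβ₁.le).trans hβη)
    fun j hj => (mul_le_mul_of_nonneg_left (hshadow q hq₁
      ((hsmall 0 (by omega)).trans (min_le_left _ _)) hq₂ j (by omega)).le hβ₂.le).trans_eq hβδ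
  refine ⟨k, hkkb, ?_⟩
  calc φ * s * (1 - ε) ^ 4 * q.1 ≤ (φ * s * (1 - ε) ^ 4) ^ k * q.1 :=
        mul_le_mul_of_nonneg_right (le_self_pow₀ hρ.le (by omega)) hq₁
    _ = (φ * (1 - ε) ^ 4) ^ k * s ^ k * q.1 := by rw [mul_right_comm φ, mul_pow]
    _ ≤ (φ * (1 - ε) ^ 4) ^ k * psiProd α₂ β₂ k q.2 * q.1 := by
        have := sub_pos.2 hε.2
        gcongr
    _ ≤ _ := horbit

theorem exists_pos_forall_exists_mul_lt_hmap_iterate_fst (hα₁ : α₁ ∈ Ico (0 : ℝ) 1)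
    (hα₂ : α₂ ∈ Ico (0 : ℝ) 1) (hβ₁ : 0 < β₁) (hβ₂ : 0 < β₂)
    (hσ : 1 < (1 - α₁) * β₁ * sigma α₂ β₂) {q : ℝ × ℝ}
    (hq : q ∈ Icc 0 (pbar α₁) ×ˢ Icc 0 (pbar α₂)) (M : ℝ) :
    ∃ c₀ > 0, ∀ c, 0 < c → c ≤ c₀ → ∃ K, ∀ n, c ≤ ((hmap α₁ α₂ β₁ β₂)^[n] q).1 →
      ∃ k ≤ K, M * c < ((hmap α₁ α₂ β₁ β₂)^[n + k] q).1 := by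
  obtain ⟨ρ, hρ, kb, η, hη, hwindow⟩ := exists_growth_window hα₁ hα₂ hβ₁ hβ₂ hσ
  have hbox : MapsTo (hmap α₁ α₂ β₁ β₂) (Icc 0 (pbar α₁) ×ˢ Icc 0 (pbar α₂))
      (Icc 0 (pbar α₁) ×ˢ Icc 0 (pbar α₂)) :=
    (mapsTo_hmap hα₁ hα₂ hβ₁.le hβ₂.le).mono_left
      (prod_mono Icc_subset_Ici_self Icc_subset_Ici_self)
  have hgrow : ∀ n, (∀ k ≤ kb, ((hmap α₁ α₂ β₁ β₂)^[n + k] q).1 ≤ η) →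
      ∃ k ≤ kb, ρ * ((hmap α₁ α₂ β₁ β₂)^[n] q).1 ≤ ((hmap α₁ α₂ β₁ β₂)^[n + k] q).1 := by
    intro n hn
    have hqn := hbox.iterate n hq
    simp only [add_comm n, Function.iterate_add_apply] at hn ⊢
    exact hwindow _ hqn.1.1 hqn.2 hn
  refine ⟨η / (|M| + 1), by positivity, fun c hc hcη => ?_⟩
  refine exists_lt_of_forall_exists_mul_le hρ hgrow M hc ?_
  calc M * c ≤ (|M| + 1) * c := mul_le_mul_of_nonneg_right (by linarith [le_abs_self M]) hc.le
    _ ≤ (|M| + 1) * (η / (|M| + 1)) := mul_le_mul_of_nonneg_left hcη (by positivity)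
    _ = η := by field_simp

end Window

theorem stmt12_general (α₁ α₂ β₁ β₂ : ℝ)
    (hα₁ : α₁ ∈ Set.Ico (0 : ℝ) 1) (hα₂ : α₂ ∈ Set.Ico (0 : ℝ) 1)
    (hβ₁ : 0 < β₁) (hβ₂ : 0 < β₂)
    (hσ : 1 < (1 - α₁) * β₁ * sigma α₂ β₂)
    (p0 : ℝ × ℝ) (hp01 : p0.1 ∈ Set.Ioo (0 : ℝ) 1) (hp02 : p0.2 ∈ Set.Ioo (0 : ℝ) 1) :
    ∃ cbar : ℝ, 0 < cbar ∧ cbar < p0.1 ∧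
      ∀ c : ℝ, 0 < c → c ≤ cbar → ∃ kbar : ℕ, ∀ n : ℕ,
        c ≤ ((hmap α₁ α₂ β₁ β₂)^[n] p0).1 →
        ∃ k ≤ kbar, 3 / (2 * rconst α₁ α₂ β₁ β₂) * c < ((hmap α₁ α₂ β₁ β₂)^[n + k] p0).1 := by
  set h := hmap α₁ α₂ β₁ β₂
  -- `p0.2` need not be `≤ p̄₂`, so the orbit is followed from `h p0` on
  obtain ⟨c₀, hc₀, hescape⟩ := exists_pos_forall_exists_mul_lt_hmap_iterate_fst hα₁ hα₂ hβ₁ hβ₂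
    hσ (mapsTo_hmap hα₁ hα₂ hβ₁.le hβ₂.le ⟨hp01.1.le, hp02.1.le⟩) (3 / (2 * rconst α₁ α₂ β₁ β₂))
  have hx₀ : 0 < (h p0).1 := hmap_fst_pos hα₁ hβ₁ hβ₂.le hp01.1 hp02.1.le
  have hp₀ := hp01.1
  refine ⟨min (min (p0.1 / 2) (h p0).1) c₀, by positivity,
    (min_le_left _ _).trans_lt ((min_le_left _ _).trans_lt (by linarith)),
    fun c hc hcbar => ?_⟩
  obtain ⟨K, hK⟩ := hescape c hc (hcbar.trans (min_le_right _ _))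
  refine ⟨K + 1, fun n hn => ?_⟩
  cases n with
  | zero =>
    obtain ⟨k, hk, hlt⟩ := hK 0 (hcbar.trans ((min_le_left _ _).trans (min_le_right _ _)))
    exact ⟨k + 1, by omega, by simpa [Function.iterate_succ_apply] using hlt⟩
  | succ n =>
    obtain ⟨k, hk, hlt⟩ := hK n (by simpa [Function.iterate_succ_apply] using hn)
    exact ⟨k, by omega, by simpa [add_right_comm n 1 k, Function.iterate_succ_apply] using hlt⟩

theorem stmt12 (α₁ α₂ β₁ β₂ : ℝ)
    (hα₁ : α₁ ∈ Set.Ico (0 : ℝ) 1) (hα₂ : α₂ ∈ Set.Ico (0 : ℝ) 1)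
    (hβ₁ : 0 < β₁) (hβ₂ : 0 < β₂)
    (hσ : 1 < (1 - α₁) * β₁ * sigma α₂ β₂)
    (p0 : ℝ × ℝ) (hp01 : p0.1 ∈ Set.Ioo (0 : ℝ) 1) (hp02 : p0.2 ∈ Set.Ioo (0 : ℝ) 1)
    (hsum : p0.1 + p0.2 ≤ 1) :
    ∃ cbar : ℝ, 0 < cbar ∧ cbar < p0.1 ∧
      ∀ c : ℝ, 0 < c → c ≤ cbar → ∃ kbar : ℕ, ∀ n : ℕ,
        c ≤ ((hmap α₁ α₂ β₁ β₂)^[n] p0).1 →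
        ∃ k ≤ kbar, 3 / (2 * rconst α₁ α₂ β₁ β₂) * c < ((hmap α₁ α₂ β₁ β₂)^[n + k] p0).1 :=
  stmt12_general α₁ α₂ β₁ β₂ hα₁ hα₂ hβ₁ hβ₂ hσ p0 hp01 hp02
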